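/- Let A be a codeterministic and complete VRA all of whose component automata are complete DFAs, and let B be the VRA obtained from A by replacing the starting automaton A^S with the DFA B^S accepting the complement of L_reg(A^S) over Σ_int ∪ Σ_proc (i.e., swapping final and non-final states). Then L(B) = WM(Σ̂) ∖ L(A). -/

import Mathlib

/-!
Cut a run with empty stack at both ends at its outermost calls: it becomes a run of one
component over `Σ_int ∪ Σ_proc` in which each factor `c u r` is read as a procedural transition
on some `J` linked to `⟨c, r⟩` with `u ∈ L(A^J)` (`VRA.NestedRun`). By completeness such a run
exists from every state on every well-matched word. Its end state is unique: `u` is the shortest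
balanced factor after `c` followed by a return, codeterminism then leaves only one `J`, and the
components are DFAs. So on a well-matched word the starting automaton has exactly one run from
its initial state; `B` has the same runs, and their end state is final in `B` iff it is not final
in `A`.
-/

/-- A symbol of a pushdown alphabet: internal, call, or return. -/
inductive VSym (I C R : Type) : Type
  | int  : I → VSym I C R
  | call : C → VSym I C R
  | ret  : R → VSym I C R

/-- The set of well-matched words over a pushdown alphabet. -/
inductive WellMatched {I C R : Type} : List (VSym I C R) → Prop
  | internal (u : List I) : WellMatched (u.map VSym.int)
  | bracket {w : List (VSym I C R)} (c : C) (r : R) :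
      WellMatched w → WellMatched (VSym.call c :: w ++ [VSym.ret r])
  | concat {w₁ w₂ : List (VSym I C R)} :
      WellMatched w₁ → WellMatched w₂ → WellMatched (w₁ ++ w₂)

def VSym.isCall {I C R : Type} : VSym I C R → Bool
  | .call _ => true
  | _ => false

def VSym.isRet {I C R : Type} : VSym I C R → Bool
  | .ret _ => true
  | _ => false

/-- The depth of a word: the maximal excess of call symbols over return symbols
in any prefix (the deepest level of unmatched calls at any point). -/
def VSym.depth {I C R : Type} (w : List (VSym I C R)) : ℕ :=
  (w.inits.map fun p => p.countP VSym.isCall - p.countP VSym.isRet).foldr max 0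

/-- A visibly recursive automaton: a family of finite automata over the internal
and procedural symbols, identified by the component map `comp` (`none` denotes the
starting automaton `A^S`, `some J` the component automaton `A^J`), together with a
linking function `link` assigning to each procedural symbol a call/return pair.
Transitions of each component automaton stay within that component. -/
structure VRA (I C R P Q : Type) where
  /-- the linking function `f : Σ_proc → Σ_call × Σ_ret` -/
  link : P → C × R
  /-- the component automaton each state belongs to (`none` = starting automaton) -/
  comp : Q → Option P
  init : Q → Prop
  final : Q → Prop
  intTrans : Q → I → Q → Prop
  procTrans : Q → P → Q → Prop
  intTrans_comp : ∀ ⦃q a p⦄, intTrans q a p → comp p = comp q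
  procTrans_comp : ∀ ⦃q J p⦄, procTrans q J p → comp p = comp q

namespace VRA

variable {I C R P Q : Type}

/-- One step of a recursive run, on configurations (state, stack of states). -/
inductive Step (A : VRA I C R P Q) : Q × List Q → VSym I C R → Q × List Q → Prop
  | int {q q' : Q} {σ : List Q} {a : I} :
      A.intTrans q a q' → Step A (q, σ) (VSym.int a) (q', σ)
  | call {q q' p : Q} {σ : List Q} {J : P} {c : C} :
      A.procTrans q J p → (A.link J).1 = c → A.comp q' = some J → A.init q' →
      Step A (q, σ) (VSym.call c) (q', p :: σ)
  | ret {q p : Q} {σ : List Q} {J : P} {r : R} :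
      A.comp q = some J → A.final q → (A.link J).2 = r →
      Step A (q, p :: σ) (VSym.ret r) (p, σ)

/-- Recursive runs of a VRA. -/
inductive Run (A : VRA I C R P Q) : Q × List Q → List (VSym I C R) → Q × List Q → Prop
  | nil (cfg : Q × List Q) : Run A cfg [] cfg
  | cons {cfg₁ cfg₂ cfg₃ : Q × List Q} {a : VSym I C R} {w : List (VSym I C R)} :
      Step A cfg₁ a cfg₂ → Run A cfg₂ w cfg₃ → Run A cfg₁ (a :: w) cfg₃

/-- The recursive language of the component automaton `A^J` (`J = none` is the
starting automaton): words with a recursive run from an initial state of the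
component with empty stack to a final state of the component with empty stack. -/
def RecLang (A : VRA I C R P Q) (J : Option P) : Set (List (VSym I C R)) :=
  {w | ∃ qi qf, A.comp qi = J ∧ A.init qi ∧ A.comp qf = J ∧ A.final qf ∧
    Run A (qi, []) w (qf, [])}

/-- The language of a VRA: the recursive language of its starting automaton. -/
def Lang (A : VRA I C R P Q) : Set (List (VSym I C R)) := A.RecLang none

/-- Regular runs: runs of the component automata viewed as ordinary finite
automata over the alphabet `Σ_int ∪ Σ_proc`. -/
inductive RegRun (A : VRA I C R P Q) : Q → List (I ⊕ P) → Q → Prop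
  | nil (q : Q) : RegRun A q [] q
  | int {q q' p : Q} {a : I} {w : List (I ⊕ P)} :
      A.intTrans q a q' → RegRun A q' w p → RegRun A q (Sum.inl a :: w) p
  | proc {q q' p : Q} {J : P} {w : List (I ⊕ P)} :
      A.procTrans q J q' → RegRun A q' w p → RegRun A q (Sum.inr J :: w) p

/-- The regular language of the component automaton `A^J`, over `Σ_int ∪ Σ_proc`. -/
def RegLang (A : VRA I C R P Q) (J : Option P) : Set (List (I ⊕ P)) :=
  {w | ∃ qi qf, A.comp qi = J ∧ A.init qi ∧ A.comp qf = J ∧ A.final qf ∧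
    RegRun A qi w qf}

/-- A VRA is codeterministic if component automata linked to the same call/return
pair have pairwise disjoint recursive languages. -/
def Codeterministic (A : VRA I C R P Q) : Prop :=
  ∀ J J' : P, J ≠ J' → A.link J = A.link J' →
    A.RecLang (some J) ∩ A.RecLang (some J') = ∅

/-- A VRA is complete if every state has an outgoing transition on every symbol of
`Σ_int ∪ Σ_proc`, and for every call/return pair the recursive languages of the
linked component automata cover all well-matched words. -/
def Complete (A : VRA I C R P Q) : Prop :=
  (∀ (q : Q) (a : I), ∃ p, A.intTrans q a p) ∧
  (∀ (q : Q) (J : P), ∃ p, A.procTrans q J p) ∧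
  (∀ (c : C) (r : R),
    (⋃ J ∈ {J : P | A.link J = (c, r)}, A.RecLang (some J)) = {w | WellMatched w})

/-- A VRA is deterministic if every component automaton (including the starting
one) has a unique initial state and deterministic transitions, and procedural
transitions from a common state on procedural symbols with the same call symbol
agree on the procedural symbol. -/
def Deterministic (A : VRA I C R P Q) : Prop :=
  (∀ J : Option P, ∃! q, A.comp q = J ∧ A.init q) ∧
  (∀ q a p p', A.intTrans q a p → A.intTrans q a p' → p = p') ∧
  (∀ q J p p', A.procTrans q J p → A.procTrans q J p' → p = p') ∧
  (∀ q J J' p p', A.procTrans q J p → A.procTrans q J' p' →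
    (A.link J).1 = (A.link J').1 → J = J')

/-- All component automata of the VRA are complete DFAs: a unique initial state in
each component and exactly one outgoing transition per state and symbol. -/
def AllCompleteDFA (A : VRA I C R P Q) : Prop :=
  (∀ J : Option P, ∃! q, A.comp q = J ∧ A.init q) ∧
  (∀ (q : Q) (a : I), ∃! p, A.intTrans q a p) ∧
  (∀ (q : Q) (J : P), ∃! p, A.procTrans q J p)

/-- The size of a VRA: number of states plus number of transitions. -/
noncomputable def size (A : VRA I C R P Q) : ℕ :=
  Nat.card Q + Nat.card {t : Q × I × Q // A.intTrans t.1 t.2.1 t.2.2}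
    + Nat.card {t : Q × P × Q // A.procTrans t.1 t.2.1 t.2.2}

variable {A : VRA I C R P Q}

theorem Run.append {cfg₁ cfg₂ cfg₃ : Q × List Q} {w₁ w₂ : List (VSym I C R)}
    (h₁ : A.Run cfg₁ w₁ cfg₂) (h₂ : A.Run cfg₂ w₂ cfg₃) : A.Run cfg₁ (w₁ ++ w₂) cfg₃ := by
  induction h₁ with
  | nil => exact h₂
  | cons s _ ih => exact .cons s (ih h₂)

theorem Run.exists_of_append {cfg cfg' : Q × List Q} {w₁ w₂ : List (VSym I C R)}
    (h : A.Run cfg (w₁ ++ w₂) cfg') : ∃ mid, A.Run cfg w₁ mid ∧ A.Run mid w₂ cfg' := by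
  induction w₁ generalizing cfg with
  | nil => exact ⟨cfg, .nil cfg, h⟩
  | cons a w₁ ih =>
    cases h with
    | cons s h =>
      obtain ⟨mid, h₁, h₂⟩ := ih h
      exact ⟨mid, .cons s h₁, h₂⟩

theorem Step.append_stack {cfg cfg' : Q × List Q} {a : VSym I C R} (τ : List Q)
    (h : A.Step cfg a cfg') : A.Step (cfg.1, cfg.2 ++ τ) a (cfg'.1, cfg'.2 ++ τ) := by
  cases h with
  | int h => exact .int h
  | call h₁ h₂ h₃ h₄ => exact .call h₁ h₂ h₃ h₄
  | ret h₁ h₂ h₃ => exact .ret h₁ h₂ h₃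

theorem Run.append_stack {cfg cfg' : Q × List Q} {w : List (VSym I C R)} (τ : List Q)
    (h : A.Run cfg w cfg') : A.Run (cfg.1, cfg.2 ++ τ) w (cfg'.1, cfg'.2 ++ τ) := by
  induction h with
  | nil => exact .nil _
  | cons s _ ih => exact .cons (s.append_stack τ) ih

theorem Run.length_add_countP_isRet {cfg cfg' : Q × List Q} {w : List (VSym I C R)}
    (h : A.Run cfg w cfg') :
    cfg'.2.length + w.countP VSym.isRet = cfg.2.length + w.countP VSym.isCall := by
  induction h with
  | nil => rfl
  | cons s _ ih =>
    cases s <;>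
      simp only [List.countP_cons, VSym.isCall, VSym.isRet, List.length_cons, Bool.false_eq_true,
        ↓reduceIte] at ih ⊢ <;> omega

/-- Words read with empty stack at both ends are balanced, and a balanced word followed by a
return is never a prefix of another one. -/
theorem Run.false_of_append_ret {q₁ q₁' q₂ q₂' : Q} {u z : List (VSym I C R)} {r : R}
    (hu : A.Run (q₁, []) u (q₁', [])) (hv : A.Run (q₂, []) (u ++ VSym.ret r :: z) (q₂', [])) :
    False := by
  obtain ⟨⟨q, σ⟩, hu', hz⟩ := hv.exists_of_append
  have h₁ := hu.length_add_countP_isRet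
  have h₂ := hu'.length_add_countP_isRet
  obtain rfl : σ = [] := List.eq_nil_of_length_eq_zero <| by
    simp only [List.length_nil, zero_add] at h₁ h₂
    omega
  cases hz with
  | cons s _ => cases s

theorem Run.eq_of_append_ret_eq {q₁ q₁' q₂ q₂' : Q} {u v x y : List (VSym I C R)} {r r' : R}
    (hu : A.Run (q₁, []) u (q₁', [])) (hv : A.Run (q₂, []) v (q₂', []))
    (h : u ++ VSym.ret r :: x = v ++ VSym.ret r' :: y) : u = v := by
  rcases List.append_eq_append_iff.mp h with ⟨_ | ⟨b, z⟩, rfl, hx⟩ | ⟨_ | ⟨b, z⟩, rfl, hy⟩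
  · simp
  · obtain ⟨rfl, -⟩ := List.cons_eq_cons.mp hx
    exact (hu.false_of_append_ret hv).elim
  · simp
  · obtain ⟨rfl, -⟩ := List.cons_eq_cons.mp hy
    exact (hv.false_of_append_ret hu).elim

theorem Run.exists_split_of_pop {cfg cfg' : Q × List Q} {p : Q} {τ σ : List Q}
    {w : List (VSym I C R)} (h : A.Run cfg w cfg') (hcfg : cfg.2 = τ ++ p :: σ)
    (hcfg' : cfg'.2 = []) :
    ∃ u r v qf J, w = u ++ VSym.ret r :: v ∧ A.Run (cfg.1, τ) u (qf, []) ∧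
      A.comp qf = some J ∧ A.final qf ∧ (A.link J).2 = r ∧ A.Run (p, σ) v cfg' := by
  induction h generalizing τ with
  | nil => simp [hcfg'] at hcfg
  | cons s rest ih =>
    cases s with
    | int ht =>
      obtain ⟨u, r, v, qf, J, rfl, hu, hJ⟩ := ih hcfg hcfg'
      exact ⟨_, r, v, qf, J, rfl, .cons (.int ht) hu, hJ⟩
    | call hp hc hqi hinit =>
      obtain ⟨u, r, v, qf, J, rfl, hu, hJ⟩ := ih (τ := _ :: τ) (congrArg _ hcfg) hcfg'
      exact ⟨_, r, v, qf, J, rfl, .cons (.call hp hc hqi hinit) hu, hJ⟩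
    | ret hq hfin hr =>
      cases τ with
      | nil =>
        obtain ⟨rfl, rfl⟩ := List.cons_eq_cons.mp hcfg
        exact ⟨[], _, _, _, _, rfl, .nil _, hq, hfin, hr, rest⟩
      | cons t τ =>
        obtain ⟨rfl, hσ⟩ := List.cons_eq_cons.mp hcfg
        obtain ⟨u, r, v, qf, J, rfl, hu, hJ⟩ := ih hσ hcfg'
        exact ⟨_, r, v, qf, J, rfl, .cons (.ret hq hfin hr) hu, hJ⟩

/-- A run with empty stack at both ends, cut at its outermost calls: each call–return pair
`c u r` is a procedural transition on `J` together with a nested run of `A^J` on `u`. -/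
inductive NestedRun (A : VRA I C R P Q) : Q → List (VSym I C R) → Q → Prop
  | nil (q : Q) : NestedRun A q [] q
  | int {q q' q'' : Q} {a : I} {w : List (VSym I C R)} :
      A.intTrans q a q' → NestedRun A q' w q'' → NestedRun A q (VSym.int a :: w) q''
  | call {q p qi qf q' : Q} {J : P} {u w : List (VSym I C R)} :
      A.procTrans q J p → A.comp qi = some J → A.init qi → NestedRun A qi u qf →
      A.comp qf = some J → A.final qf → NestedRun A p w q' →
      NestedRun A q (VSym.call (A.link J).1 :: u ++ VSym.ret (A.link J).2 :: w) q'

theorem NestedRun.comp_eq {q q' : Q} {w : List (VSym I C R)} (h : A.NestedRun q w q') :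
    A.comp q' = A.comp q := by
  induction h with
  | nil => rfl
  | int ht _ ih => rw [ih, A.intTrans_comp ht]
  | call hp _ _ _ _ _ _ _ ih => rw [ih, A.procTrans_comp hp]

theorem NestedRun.toRun {q q' : Q} {w : List (VSym I C R)} (h : A.NestedRun q w q') :
    A.Run (q, []) w (q', []) := by
  induction h with
  | nil => exact .nil _
  | int ht _ ih => exact .cons (.int ht) ih
  | call hp hqi hinit _ hqf hfin _ ihu ihw =>
    exact .cons (.call hp rfl hqi hinit)
      ((ihu.append_stack [_]).append (.cons (.ret hqf hfin rfl) ihw))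

theorem Run.toNestedRun {q q' : Q} {w : List (VSym I C R)} (h : A.Run (q, []) w (q', [])) :
    A.NestedRun q w q' := by
  cases h with
  | nil => exact .nil _
  | cons s rest =>
    cases s with
    | int ht => exact .int ht rest.toNestedRun
    | call hp hc hqi hinit =>
      obtain ⟨u, r, v, qf, J', rfl, hu, hqf, hfin, hr, hv⟩ :=
        rest.exists_split_of_pop (τ := []) (σ := []) rfl rfl
      have hun := hu.toNestedRun
      obtain rfl : J' = _ := Option.some.inj (hqf.symm.trans (hun.comp_eq.trans hqi))
      subst hc hr
      exact .call hp hqi hinit hun hqf hfin hv.toNestedRun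
termination_by w.length
decreasing_by all_goals (subst_vars; simp <;> omega)

theorem nestedRun_iff_run {q q' : Q} {w : List (VSym I C R)} :
    A.NestedRun q w q' ↔ A.Run (q, []) w (q', []) :=
  ⟨NestedRun.toRun, Run.toNestedRun⟩

theorem mem_recLang_iff_nestedRun {J : Option P} {w : List (VSym I C R)} :
    w ∈ A.RecLang J ↔ ∃ qi qf, A.comp qi = J ∧ A.init qi ∧ A.comp qf = J ∧ A.final qf ∧
      A.NestedRun qi w qf := by
  simp only [RecLang, Set.mem_ofPred_eq, nestedRun_iff_run]

theorem NestedRun.append {q q' q'' : Q} {w₁ w₂ : List (VSym I C R)}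
    (h₁ : A.NestedRun q w₁ q') (h₂ : A.NestedRun q' w₂ q'') : A.NestedRun q (w₁ ++ w₂) q'' := by
  induction h₁ with
  | nil => exact h₂
  | int ht _ ih => exact .int ht (ih h₂)
  | call hp hqi hinit hu hqf hfin _ _ ih =>
    simpa using NestedRun.call hp hqi hinit hu hqf hfin (ih h₂)

theorem NestedRun.wellMatched {q q' : Q} {w : List (VSym I C R)} (h : A.NestedRun q w q') :
    WellMatched w := by
  induction h with
  | nil => exact .internal []
  | int _ _ ih => exact .concat (.internal [_]) ih
  | call _ _ _ _ _ _ _ ihu ihw => simpa using (ihu.bracket _ _).concat ihw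

theorem NestedRun.of_call_cons {q q' : Q} {c : C} {x : List (VSym I C R)}
    (h : A.NestedRun q (VSym.call c :: x) q') :
    ∃ J p u w, (A.link J).1 = c ∧ x = u ++ VSym.ret (A.link J).2 :: w ∧ A.procTrans q J p ∧
      u ∈ A.RecLang (some J) ∧ A.NestedRun p w q' := by
  cases h with
  | call hp hqi hinit hu hqf hfin hw =>
    exact ⟨_, _, _, _, rfl, rfl, hp, ⟨_, _, hqi, hinit, hqf, hfin, hu.toRun⟩, hw⟩

/-- Codeterminism makes the component guessed at a call visible at the matching return. -/
theorem NestedRun.unique (hcodet : A.Codeterministic) (hdfa : A.AllCompleteDFA) {q q₁ q₂ : Q}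
    {w : List (VSym I C R)} (h₁ : A.NestedRun q w q₁) (h₂ : A.NestedRun q w q₂) : q₁ = q₂ := by
  induction h₁ generalizing q₂ with
  | nil => cases h₂; rfl
  | int ht _ ih =>
    cases h₂ with
    | int ht' h₂ =>
      obtain rfl := (hdfa.2.1 _ _).unique ht ht'
      exact ih h₂
  | @call q p qi qf q' J u w hp hqi hinit hu hqf hfin _ _ ih =>
    obtain ⟨J', p', u', w', hc, heq, hp', hu', hw'⟩ := h₂.of_call_cons
    have huJ : u ∈ A.RecLang (some J) := ⟨qi, qf, hqi, hinit, hqf, hfin, hu.toRun⟩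
    obtain ⟨_, _, -, -, -, -, hu'run⟩ := id hu'
    obtain rfl : u = u' := hu.toRun.eq_of_append_ret_eq hu'run heq
    obtain ⟨hr, rfl⟩ : (A.link J).2 = (A.link J').2 ∧ w = w' := by simpa using heq
    obtain rfl : J = J' := by
      by_contra hne
      exact (hcodet J J' hne (Prod.ext hc.symm hr)).subset ⟨huJ, hu'⟩
    obtain rfl := (hdfa.2.2 _ _).unique hp hp'
    exact ih hw'

theorem _root_.WellMatched.exists_nestedRun (hcomp : A.Complete) {w : List (VSym I C R)}
    (hw : WellMatched w) (q : Q) : ∃ q', A.NestedRun q w q' := by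
  induction hw generalizing q with
  | internal u =>
    induction u generalizing q with
    | nil => exact ⟨q, .nil q⟩
    | cons a u ih =>
      obtain ⟨q₁, h₁⟩ := hcomp.1 q a
      obtain ⟨q', h⟩ := ih q₁
      exact ⟨q', .int h₁ h⟩
  | @bracket w c r hw _ =>
    have hmem : w ∈ ⋃ J ∈ {J : P | A.link J = (c, r)}, A.RecLang (some J) := by
      rw [hcomp.2.2 c r]
      exact hw
    obtain ⟨J, hJ, hwJ⟩ := Set.mem_iUnion₂.mp hmem
    obtain ⟨qi, qf, hqi, hinit, hqf, hfin, hrun⟩ := mem_recLang_iff_nestedRun.mp hwJ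
    obtain ⟨p, hp⟩ := hcomp.2.1 q J
    have hJ : A.link J = (c, r) := hJ
    exact ⟨p, by simpa [hJ] using NestedRun.call hp hqi hinit hrun hqf hfin (.nil p)⟩
  | concat _ _ ih₁ ih₂ =>
    obtain ⟨q₁, h₁⟩ := ih₁ q
    obtain ⟨q', h₂⟩ := ih₂ q₁
    exact ⟨q', h₁.append h₂⟩

theorem NestedRun.of_agree {B : VRA I C R P Q} (hlink : A.link = B.link) (hcomp : A.comp = B.comp)
    (hinit : A.init = B.init) (hint : A.intTrans = B.intTrans) (hproc : A.procTrans = B.procTrans)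
    (hfin : ∀ q, A.comp q ≠ none → A.final q → B.final q) {q q' : Q} {w : List (VSym I C R)}
    (h : A.NestedRun q w q') : B.NestedRun q w q' := by
  induction h with
  | nil => exact .nil _
  | int ht _ ih => exact .int (hint ▸ ht) ih
  | call hp hqi hinit' _ hqf hfin' _ ihu ihw =>
    rw [hlink]
    exact .call (hproc ▸ hp) (hcomp ▸ hqi) (hinit ▸ hinit') ihu (hcomp ▸ hqf)
      (hfin _ (by simp [hqf]) hfin') ihw

end VRA

/-- if `A` is a codeterministic and complete VRA all of whose
component automata are complete DFAs, and `B` is obtained from `A` by swapping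
the final and non-final states of the starting automaton (keeping everything else
unchanged), then `L(B) = WM(Σ̂) ∖ L(A)`. -/
theorem VRA.complementation {I C R P Q : Type} (A B : VRA I C R P Q)
    (hcodet : A.Codeterministic) (hcomp : A.Complete) (hdfa : A.AllCompleteDFA)
    (hlink : B.link = A.link) (hcompB : B.comp = A.comp) (hinit : B.init = A.init)
    (hint : B.intTrans = A.intTrans) (hproc : B.procTrans = A.procTrans)
    (hfinS : ∀ q : Q, A.comp q = none → (B.final q ↔ ¬ A.final q))
    (hfinC : ∀ q : Q, A.comp q ≠ none → (B.final q ↔ A.final q)) :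
    B.Lang = {w | WellMatched w} \ A.Lang := by
  have hAB {q w q'} : A.NestedRun q w q' → B.NestedRun q w q' :=
    .of_agree hlink.symm hcompB.symm hinit.symm hint.symm hproc.symm
      fun q hq => (hfinC q hq).mpr
  have hBA {q w q'} : B.NestedRun q w q' → A.NestedRun q w q' :=
    .of_agree hlink hcompB hinit hint hproc fun q hq => (hfinC q (hcompB ▸ hq)).mp
  obtain ⟨q₀, ⟨hq₀, hinit₀⟩, hq₀_unique⟩ := hdfa.1 none
  ext w
  simp only [VRA.Lang, VRA.mem_recLang_iff_nestedRun, hcompB, hinit, Set.mem_sdiff,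
    Set.mem_ofPred_eq]
  constructor
  · rintro ⟨qi, qf, hqi, hinit_qi, hqf, hfin, hB⟩
    refine ⟨(hBA hB).wellMatched, ?_⟩
    rintro ⟨qi', qf', hqi', hinit_qi', -, hfin', hA⟩
    obtain rfl : qi' = qi :=
      (hq₀_unique _ ⟨hqi', hinit_qi'⟩).trans (hq₀_unique _ ⟨hqi, hinit_qi⟩).symm
    obtain rfl := (hBA hB).unique hcodet hdfa hA
    exact (hfinS qf hqf).mp hfin hfin'
  · rintro ⟨hwm, hnot⟩
    obtain ⟨qf, hA⟩ := hwm.exists_nestedRun hcomp q₀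
    have hqf : A.comp qf = none := hA.comp_eq.trans hq₀
    exact ⟨q₀, qf, hq₀, hinit₀, hqf,
      (hfinS qf hqf).mpr fun hfin => hnot ⟨q₀, qf, hq₀, hinit₀, hqf, hfin, hA⟩, hAB hA⟩
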